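/- Let a ∈ C¹([0,ℓ]) with a > 0, b ∈ C([0,ℓ]) with b ≥ 0, and p ∈ C([0,T]) with p > 0. For 2 ≤ n ≤ N+1 set K^n(y) = p(t_n) a(y) and c^n(y) = p(t_n) b(y) + T̂_{n,n−1}, and let f^n ∈ C([0,ℓ]). Suppose broken polynomials u_h^1, …, u_h^{N+1} of degree k satisfy, for each n with 2 ≤ n ≤ N+1, the fully discrete L1-NIPG scheme B^n(u_h^n, v) = Σ_{m=1}^M ∫_{K_m} (f^n + T̂_{n,1} u_h^1 + Σ_{j=2}^{n−1} (T̂_{n,j} − T̂_{n,j−1}) u_h^j) v_m dy for all broken polynomials v of degree k, where B^n is the NIPG bilinear form with coefficients K^n, c^n. Then for each n with 2 ≤ n ≤ N+1, ‖u_h^n‖_{L²(0,ℓ)} ≤ τ_{n−1}^α Γ(2−α) (‖f^n‖_{L²(0,ℓ)} + T̂_{n,1} ‖u_h^1‖_{L²(0,ℓ)} + Σ_{j=2}^{n−1} (T̂_{n,j} − T̂_{n,j−1}) ‖u_h^j‖_{L²(0,ℓ)}). -/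

import Mathlib

/-!
Test the scheme at step `n` with `v = u_h^n`. The two consistency terms of the NIPG form cancel
on the diagonal and the diffusion, reaction and penalty terms are nonnegative, so
`B^n(u, u) ≥ T̂_{n,n-1} ‖u‖²`. The right-hand side is at most the bracket of the claim times
`‖u‖`, by the Cauchy–Schwarz inequality on each element and then over the elements, since the
weights `T̂_{n,1}` and `T̂_{n,j} - T̂_{n,j-1}` are nonnegative (the latter by concavity of
`x ↦ x ^ (1 - α)`). As `T̂_{n,n-1} = (τ_{n-1}^α Γ(2-α))⁻¹`, dividing by `‖u‖` gives the bound.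
-/

/-- Graded temporal mesh `t_n = T ((n-1)/N)^r`. -/
noncomputable def tmesh (T r : ℝ) (N n : ℕ) : ℝ := T * (((n : ℝ) - 1) / (N : ℝ)) ^ r

/-- Step sizes `τ_n = t_{n+1} - t_n`. -/
noncomputable def tau (T r : ℝ) (N n : ℕ) : ℝ := tmesh T r N (n + 1) - tmesh T r N n

/-- L1 coefficients `T̂_{n,j}` (with the convention `T̂_{n,0} = 0`). -/
noncomputable def That (α T r : ℝ) (N n j : ℕ) : ℝ :=
  if j = 0 then 0 else
    ((tmesh T r N n - tmesh T r N j) ^ (1 - α) -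
        (tmesh T r N n - tmesh T r N (j + 1)) ^ (1 - α)) /
      (tau T r N j * Real.Gamma (2 - α))

/-- Node `y_m = (m-1) h` with `h = ℓ/M`. -/
noncomputable def node (ℓ : ℝ) (M m : ℕ) : ℝ := ((m : ℝ) - 1) * (ℓ / (M : ℝ))

/-- The jump `[v(y_m)]` of a broken polynomial `v = (v_1,…,v_M)` at the node `y_m`. -/
noncomputable def jump (ℓ : ℝ) (M : ℕ) (v : ℕ → Polynomial ℝ) (m : ℕ) : ℝ :=
  if m = 1 then (v 1).eval (node ℓ M 1)
  else if m = M + 1 then -((v M).eval (node ℓ M (M + 1)))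
  else (v m).eval (node ℓ M m) - (v (m - 1)).eval (node ℓ M m)

/-- The average `{v(y_m)}` of a broken polynomial `v = (v_1,…,v_M)` at the node `y_m`. -/
noncomputable def avg (ℓ : ℝ) (M : ℕ) (v : ℕ → Polynomial ℝ) (m : ℕ) : ℝ :=
  if m = 1 then (v 1).eval (node ℓ M 1)
  else if m = M + 1 then (v M).eval (node ℓ M (M + 1))
  else ((v m).eval (node ℓ M m) + (v (m - 1)).eval (node ℓ M m)) / 2

/-- The NIPG bilinear form with coefficients `K`, `c` and penalties `σ_m`:
`B(u,v) = Σ_m ∫_{K_m}(K u' v' + c u v) + Σ_m {K(y_m) u'(y_m)}[v(y_m)]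
  - Σ_m {K(y_m) v'(y_m)}[u(y_m)] + Σ_m σ_m [u(y_m)][v(y_m)]`. -/
noncomputable def nipg (ℓ : ℝ) (M : ℕ) (K c : ℝ → ℝ) (σ : ℕ → ℝ)
    (u v : ℕ → Polynomial ℝ) : ℝ :=
  (∑ m ∈ Finset.Icc 1 M, ∫ y in node ℓ M m..node ℓ M (m + 1),
      (K y * (Polynomial.derivative (u m)).eval y * (Polynomial.derivative (v m)).eval y +
        c y * (u m).eval y * (v m).eval y))
  + (∑ m ∈ Finset.Icc 1 (M + 1),
      K (node ℓ M m) * avg ℓ M (fun i => Polynomial.derivative (u i)) m * jump ℓ M v m)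
  - (∑ m ∈ Finset.Icc 1 (M + 1),
      K (node ℓ M m) * avg ℓ M (fun i => Polynomial.derivative (v i)) m * jump ℓ M u m)
  + (∑ m ∈ Finset.Icc 1 (M + 1), σ m * jump ℓ M u m * jump ℓ M v m)

/-- The broken `L²(0,ℓ)` norm of a broken polynomial. -/
noncomputable def brokenL2 (ℓ : ℝ) (M : ℕ) (v : ℕ → Polynomial ℝ) : ℝ :=
  Real.sqrt (∑ m ∈ Finset.Icc 1 M,
    ∫ y in node ℓ M m..node ℓ M (m + 1), ((v m).eval y) ^ 2)

/-- The `L²(0,ℓ)` norm of a function. -/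
noncomputable def funL2 (ℓ : ℝ) (f : ℝ → ℝ) : ℝ :=
  Real.sqrt (∫ y in (0 : ℝ)..ℓ, (f y) ^ 2)

open MeasureTheory Finset

theorem integral_mul_le_sqrt_mul_sqrt {X : Type*} [MeasurableSpace X] {μ : Measure X}
    {g h : X → ℝ} (hg : Integrable (fun x => g x ^ 2) μ) (hh : Integrable (fun x => h x ^ 2) μ)
    (hgh : Integrable (fun x => g x * h x) μ) :
    ∫ x, g x * h x ∂μ ≤ √(∫ x, g x ^ 2 ∂μ) * √(∫ x, h x ^ 2 ∂μ) := by
  have hquad : ∀ t : ℝ, 0 ≤ (∫ x, h x ^ 2 ∂μ) * (t * t) + (2 * ∫ x, g x * h x ∂μ) * t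
      + ∫ x, g x ^ 2 ∂μ := by
    intro t
    have hexpand : (fun x => (t * h x + g x) ^ 2) =
        fun x => t * t * h x ^ 2 + 2 * t * (g x * h x) + g x ^ 2 := by
      ext x; ring
    have : 0 ≤ ∫ x, (t * h x + g x) ^ 2 ∂μ := integral_nonneg fun x => sq_nonneg _
    have hcross : Integrable (fun x => t * t * h x ^ 2 + 2 * t * (g x * h x)) μ :=
      (hh.const_mul _).add (hgh.const_mul _)
    rw [hexpand, integral_add hcross hg, integral_add (hh.const_mul _) (hgh.const_mul _),
      integral_const_mul, integral_const_mul] at this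
    linarith
  have hdisc := discrim_le_zero hquad
  rw [discrim] at hdisc
  rw [← Real.sqrt_mul (integral_nonneg fun x => sq_nonneg _)]
  apply Real.le_sqrt_of_sq_le
  nlinarith

theorem intervalIntegral.integral_mul_le_sqrt_mul_sqrt {a b : ℝ} (hab : a ≤ b) {g h : ℝ → ℝ}
    (hg : ContinuousOn g (Set.uIcc a b)) (hh : ContinuousOn h (Set.uIcc a b)) :
    ∫ y in a..b, g y * h y ≤ √(∫ y in a..b, g y ^ 2) * √(∫ y in a..b, h y ^ 2) := by
  simp only [intervalIntegral.integral_of_le hab]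
  exact _root_.integral_mul_le_sqrt_mul_sqrt ((hg.pow 2).intervalIntegrable (μ := volume)).1
    ((hh.pow 2).intervalIntegrable (μ := volume)).1 ((hg.mul hh).intervalIntegrable (μ := volume)).1

section Mesh

variable {α T r : ℝ} {N : ℕ}

theorem tmesh_strictMonoOn (hT : 0 < T) (hr : 0 < r) (hN : 0 < N) :
    StrictMonoOn (tmesh T r N) (Set.Ici 1) := by
  intro i hi j _ hij
  have hi' : (1 : ℝ) ≤ i := Nat.one_le_cast.mpr hi
  have hij' : (i : ℝ) < j := Nat.cast_lt.mpr hij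
  have hN' : (0 : ℝ) < N := Nat.cast_pos.mpr hN
  unfold tmesh
  gcongr

theorem tmesh_mem_Icc (hT : 0 ≤ T) (hr : 0 ≤ r) (hN : 0 < N) {n : ℕ} (hn : 1 ≤ n)
    (hnN : n ≤ N + 1) : tmesh T r N n ∈ Set.Icc 0 T := by
  have hN' : (0 : ℝ) < N := Nat.cast_pos.mpr hN
  have hn' : (1 : ℝ) ≤ n := Nat.one_le_cast.mpr hn
  have hnN' : (n : ℝ) ≤ N + 1 := by exact_mod_cast hnN
  have hx0 : 0 ≤ ((n : ℝ) - 1) / N := div_nonneg (by linarith) hN'.le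
  have hx1 : ((n : ℝ) - 1) / N ≤ 1 := (div_le_one hN').mpr (by linarith)
  exact ⟨by unfold tmesh; positivity,
    mul_le_of_le_one_right hT (Real.rpow_le_one hx0 hx1 hr)⟩

theorem tau_pos (hT : 0 < T) (hr : 0 < r) (hN : 0 < N) {j : ℕ} (hj : 1 ≤ j) :
    0 < tau T r N j :=
  sub_pos.mpr <| tmesh_strictMonoOn hT hr hN hj (Set.mem_Ici.mpr (by omega)) j.lt_succ_self

theorem That_nonneg (hα : α ≤ 1) (hT : 0 < T) (hr : 0 < r) (hN : 0 < N) {n j : ℕ}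
    (hj : 1 ≤ j) (hjn : j < n) : 0 ≤ That α T r N n j := by
  have hmono := (tmesh_strictMonoOn hT hr hN).monotoneOn
  have hnear : tmesh T r N j ≤ tmesh T r N (j + 1) :=
    hmono hj (Set.mem_Ici.mpr (by omega)) (by omega)
  have hfar : tmesh T r N (j + 1) ≤ tmesh T r N n :=
    hmono (Set.mem_Ici.mpr (by omega)) (Set.mem_Ici.mpr (by omega)) hjn
  unfold That
  rw [if_neg (by omega)]
  refine div_nonneg (sub_nonneg.mpr ?_)
    (mul_pos (tau_pos hT hr hN hj) (Real.Gamma_pos_of_pos (by linarith))).le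
  exact Real.rpow_le_rpow (by linarith) (by linarith) (by linarith)

theorem That_pred_le_That (hα₀ : 0 ≤ α) (hα₁ : α ≤ 1) (hT : 0 < T) (hr : 0 < r) (hN : 0 < N)
    {n j : ℕ} (hj : 2 ≤ j) (hjn : j < n) :
    That α T r N n (j - 1) ≤ That α T r N n j := by
  have hmono := tmesh_strictMonoOn hT hr hN
  have hpred : j - 1 + 1 = j := by omega
  have h₁ : tmesh T r N (j - 1) < tmesh T r N j :=
    hmono (Set.mem_Ici.mpr (by omega)) (Set.mem_Ici.mpr (by omega)) (by omega)
  have h₂ : tmesh T r N j < tmesh T r N (j + 1) :=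
    hmono (Set.mem_Ici.mpr (by omega)) (Set.mem_Ici.mpr (by omega)) (by omega)
  have h₃ : tmesh T r N (j + 1) ≤ tmesh T r N n :=
    hmono.monotoneOn (Set.mem_Ici.mpr (by omega)) (Set.mem_Ici.mpr (by omega)) hjn
  have hslope := (Real.concaveOn_rpow (p := 1 - α) (by linarith) (by linarith)).slope_anti_adjacent
    (Set.mem_Ici.mpr (sub_nonneg.mpr h₃)) (Set.mem_Ici.mpr (by linarith : (0 : ℝ) ≤ _))
    (by linarith : tmesh T r N n - tmesh T r N (j + 1) < tmesh T r N n - tmesh T r N j)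
    (by linarith : tmesh T r N n - tmesh T r N j < tmesh T r N n - tmesh T r N (j - 1))
  have hτ₁ : tau T r N (j - 1) =
      (tmesh T r N n - tmesh T r N (j - 1)) - (tmesh T r N n - tmesh T r N j) := by
    unfold tau; rw [hpred]; ring
  have hτ₂ : tau T r N j =
      (tmesh T r N n - tmesh T r N j) - (tmesh T r N n - tmesh T r N (j + 1)) := by
    unfold tau; ring
  unfold That
  rw [if_neg (by omega), if_neg (by omega), hpred, hτ₁, hτ₂, div_mul_eq_div_div,
    div_mul_eq_div_div]
  exact div_le_div_of_nonneg_right hslope (Real.Gamma_pos_of_pos (by linarith)).le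

theorem That_pred_eq (hα : α < 1) {n : ℕ} (hn : 2 ≤ n) (hτ : 0 < tau T r N (n - 1)) :
    That α T r N n (n - 1) = (tau T r N (n - 1) ^ α * Real.Gamma (2 - α))⁻¹ := by
  have hpred : n - 1 + 1 = n := by omega
  have hΓ : 0 < Real.Gamma (2 - α) := Real.Gamma_pos_of_pos (by linarith)
  have hstep : tmesh T r N n - tmesh T r N (n - 1) = tau T r N (n - 1) := by
    unfold tau; rw [hpred]
  unfold That
  rw [if_neg (by omega), hpred, sub_self, Real.zero_rpow (by linarith), sub_zero, hstep,
    Real.rpow_sub hτ, Real.rpow_one]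
  field_simp

end Mesh

section Broken

variable {ℓ : ℝ} {M : ℕ}

theorem node_succ (m : ℕ) : node ℓ M (m + 1) = node ℓ M m + ℓ / M := by
  unfold node; push_cast; ring

theorem node_le_node_succ (hℓ : 0 ≤ ℓ) (m : ℕ) : node ℓ M m ≤ node ℓ M (m + 1) := by
  rw [node_succ]
  exact le_add_of_nonneg_right (by positivity)

theorem uIcc_node_subset (hℓ : 0 ≤ ℓ) {m : ℕ} (hm : m ∈ Icc 1 M) :
    Set.uIcc (node ℓ M m) (node ℓ M (m + 1)) ⊆ Set.Icc 0 ℓ := by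
  obtain ⟨hm₁, hmM⟩ := Finset.mem_Icc.mp hm
  have hM : (0 : ℝ) < M := Nat.cast_pos.mpr (by omega)
  have hm₁' : (1 : ℝ) ≤ m := Nat.one_le_cast.mpr hm₁
  have hmM' : (m : ℝ) ≤ M := Nat.cast_le.mpr hmM
  rw [Set.uIcc_of_le (node_le_node_succ hℓ m)]
  refine Set.Icc_subset_Icc (by unfold node; positivity) ?_
  calc node ℓ M (m + 1) = m * (ℓ / M) := by unfold node; push_cast; ring
    _ ≤ M * (ℓ / M) := by gcongr
    _ = ℓ := by field_simp

noncomputable def brokenInner (ℓ : ℝ) (M : ℕ) (g h : ℕ → ℝ → ℝ) : ℝ :=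
  ∑ m ∈ Icc 1 M, ∫ y in node ℓ M m..node ℓ M (m + 1), g m y * h m y

def BrokenContinuous (ℓ : ℝ) (M : ℕ) (g : ℕ → ℝ → ℝ) : Prop :=
  ∀ m ∈ Icc 1 M, ContinuousOn (g m) (Set.uIcc (node ℓ M m) (node ℓ M (m + 1)))

theorem BrokenContinuous.polynomial (v : ℕ → Polynomial ℝ) :
    BrokenContinuous ℓ M (fun m y => (v m).eval y) :=
  fun m _ => (v m).continuous.continuousOn

theorem BrokenContinuous.of_continuousOn (hℓ : 0 ≤ ℓ) {f : ℝ → ℝ}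
    (hf : ContinuousOn f (Set.Icc 0 ℓ)) : BrokenContinuous ℓ M (fun _ => f) :=
  fun _ hm => hf.mono (uIcc_node_subset hℓ hm)

theorem BrokenContinuous.add {g₁ g₂ : ℕ → ℝ → ℝ} (hg₁ : BrokenContinuous ℓ M g₁)
    (hg₂ : BrokenContinuous ℓ M g₂) : BrokenContinuous ℓ M (fun m y => g₁ m y + g₂ m y) :=
  fun m hm => (hg₁ m hm).add (hg₂ m hm)

theorem BrokenContinuous.const_mul {g : ℕ → ℝ → ℝ} (hg : BrokenContinuous ℓ M g) (c : ℝ) :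
    BrokenContinuous ℓ M (fun m y => c * g m y) :=
  fun m hm => (hg m hm).const_smul c

theorem BrokenContinuous.sum {ι : Type*} (s : Finset ι) {g : ι → ℕ → ℝ → ℝ}
    (hg : ∀ j ∈ s, BrokenContinuous ℓ M (g j)) :
    BrokenContinuous ℓ M (fun m y => ∑ j ∈ s, g j m y) :=
  fun m hm => continuousOn_finsetSum s fun j hj => hg j hj m hm

theorem BrokenContinuous.intervalIntegrable_mul {g h : ℕ → ℝ → ℝ}
    (hg : BrokenContinuous ℓ M g) (hh : BrokenContinuous ℓ M h) {m : ℕ} (hm : m ∈ Icc 1 M) :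
    IntervalIntegrable (fun y => g m y * h m y) volume (node ℓ M m) (node ℓ M (m + 1)) :=
  ((hg m hm).mul (hh m hm)).intervalIntegrable

theorem brokenInner_add_left {g₁ g₂ h : ℕ → ℝ → ℝ} (hg₁ : BrokenContinuous ℓ M g₁)
    (hg₂ : BrokenContinuous ℓ M g₂) (hh : BrokenContinuous ℓ M h) :
    brokenInner ℓ M (fun m y => g₁ m y + g₂ m y) h =
      brokenInner ℓ M g₁ h + brokenInner ℓ M g₂ h := by
  unfold brokenInner
  rw [← Finset.sum_add_distrib]
  refine Finset.sum_congr rfl fun m hm => ?_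
  simp only [add_mul]
  exact intervalIntegral.integral_add (hg₁.intervalIntegrable_mul hh hm)
    (hg₂.intervalIntegrable_mul hh hm)

theorem brokenInner_const_mul_left (c : ℝ) (g h : ℕ → ℝ → ℝ) :
    brokenInner ℓ M (fun m y => c * g m y) h = c * brokenInner ℓ M g h := by
  simp only [brokenInner, Finset.mul_sum, mul_assoc, intervalIntegral.integral_const_mul]

theorem brokenInner_sum_left {ι : Type*} (s : Finset ι) {g : ι → ℕ → ℝ → ℝ} {h : ℕ → ℝ → ℝ}
    (hg : ∀ j ∈ s, BrokenContinuous ℓ M (g j)) (hh : BrokenContinuous ℓ M h) :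
    brokenInner ℓ M (fun m y => ∑ j ∈ s, g j m y) h = ∑ j ∈ s, brokenInner ℓ M (g j) h := by
  unfold brokenInner
  rw [Finset.sum_comm]
  refine Finset.sum_congr rfl fun m hm => ?_
  simp only [Finset.sum_mul]
  exact intervalIntegral.integral_finsetSum fun j hj => (hg j hj).intervalIntegrable_mul hh hm

theorem brokenInner_self_nonneg (hℓ : 0 ≤ ℓ) (g : ℕ → ℝ → ℝ) : 0 ≤ brokenInner ℓ M g g :=
  Finset.sum_nonneg fun m _ =>
    intervalIntegral.integral_nonneg (node_le_node_succ hℓ m) fun _ _ => mul_self_nonneg _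

theorem brokenInner_le_sqrt_mul_sqrt (hℓ : 0 ≤ ℓ) {g h : ℕ → ℝ → ℝ}
    (hg : BrokenContinuous ℓ M g) (hh : BrokenContinuous ℓ M h) :
    brokenInner ℓ M g h ≤ √(brokenInner ℓ M g g) * √(brokenInner ℓ M h h) := by
  have hsq_nonneg (g : ℕ → ℝ → ℝ) (m : ℕ) : 0 ≤ ∫ y in node ℓ M m..node ℓ M (m + 1), g m y ^ 2 :=
    intervalIntegral.integral_nonneg (node_le_node_succ hℓ m) fun _ _ => sq_nonneg _
  unfold brokenInner
  simp only [← sq]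
  exact (Finset.sum_le_sum fun m hm => intervalIntegral.integral_mul_le_sqrt_mul_sqrt
    (node_le_node_succ hℓ m) (hg m hm) (hh m hm)).trans
    (Real.sum_sqrt_mul_sqrt_le _ (hsq_nonneg g) (hsq_nonneg h))

theorem brokenL2_eq_sqrt_brokenInner (v : ℕ → Polynomial ℝ) :
    brokenL2 ℓ M v =
      √(brokenInner ℓ M (fun m y => (v m).eval y) (fun m y => (v m).eval y)) := by
  simp only [brokenL2, brokenInner, sq]

theorem funL2_eq_sqrt_brokenInner (hℓ : 0 ≤ ℓ) (hM : M ≠ 0) {f : ℝ → ℝ}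
    (hf : ContinuousOn f (Set.Icc 0 ℓ)) :
    funL2 ℓ f = √(brokenInner ℓ M (fun _ => f) (fun _ => f)) := by
  have hfirst : node ℓ M 1 = 0 := by simp [node]
  have hlast : node ℓ M (M + 1) = ℓ := by
    have : (M : ℝ) ≠ 0 := Nat.cast_ne_zero.mpr hM
    unfold node; push_cast; field_simp; ring
  have hpieces : ∀ m ∈ Set.Ico 1 (M + 1),
      IntervalIntegrable (fun y => f y ^ 2) volume (node ℓ M m) (node ℓ M (m + 1)) := by
    intro m hm
    have hm' : m ∈ Icc 1 M := Finset.mem_Icc.mpr ⟨hm.1, Nat.lt_succ_iff.mp hm.2⟩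
    exact ((hf.mono (uIcc_node_subset hℓ hm')).pow 2).intervalIntegrable
  rw [funL2, brokenInner, ← Finset.Ico_add_one_right_eq_Icc]
  simp only [← sq]
  rw [intervalIntegral.sum_integral_adjacent_intervals_Ico (by omega) hpieces, hfirst, hlast]

theorem mul_brokenL2_sq_le_nipg (hℓ : 0 ≤ ℓ) {K c : ℝ → ℝ} {c₀ : ℝ}
    (hK : ContinuousOn K (Set.Icc 0 ℓ)) (hK₀ : ∀ y ∈ Set.Icc 0 ℓ, 0 ≤ K y)
    (hc : ContinuousOn c (Set.Icc 0 ℓ)) (hc₀ : ∀ y ∈ Set.Icc 0 ℓ, c₀ ≤ c y)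
    {σ : ℕ → ℝ} (hσ : ∀ m, 0 ≤ σ m) (u : ℕ → Polynomial ℝ) :
    c₀ * brokenL2 ℓ M u ^ 2 ≤ nipg ℓ M K c σ u u := by
  have hpenalty : 0 ≤ ∑ m ∈ Icc 1 (M + 1), σ m * jump ℓ M u m * jump ℓ M u m :=
    Finset.sum_nonneg fun m _ => by rw [mul_assoc]; exact mul_nonneg (hσ m) (mul_self_nonneg _)
  have hvolume : c₀ * brokenL2 ℓ M u ^ 2 ≤ ∑ m ∈ Icc 1 M, ∫ y in node ℓ M m..node ℓ M (m + 1),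
      (K y * (Polynomial.derivative (u m)).eval y * (Polynomial.derivative (u m)).eval y +
        c y * (u m).eval y * (u m).eval y) := by
    rw [brokenL2_eq_sqrt_brokenInner, Real.sq_sqrt (brokenInner_self_nonneg hℓ _),
      brokenInner, Finset.mul_sum]
    refine Finset.sum_le_sum fun m hm => ?_
    have hKm := hK.mono (uIcc_node_subset hℓ hm)
    have hcm := hc.mono (uIcc_node_subset hℓ hm)
    rw [← intervalIntegral.integral_const_mul]
    refine intervalIntegral.integral_mono_on (node_le_node_succ hℓ m)
      (ContinuousOn.intervalIntegrable (by fun_prop))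
      (ContinuousOn.intervalIntegrable (by fun_prop)) fun y hy => ?_
    have hy' := uIcc_node_subset hℓ hm (Set.Icc_subset_uIcc hy)
    have hu := mul_self_nonneg ((u m).eval y)
    nlinarith [mul_nonneg (hK₀ y hy') (mul_self_nonneg ((Polynomial.derivative (u m)).eval y)),
      mul_le_mul_of_nonneg_right (hc₀ y hy') hu]
  have hdiag : nipg ℓ M K c σ u u = (∑ m ∈ Icc 1 M, ∫ y in node ℓ M m..node ℓ M (m + 1),
      (K y * (Polynomial.derivative (u m)).eval y * (Polynomial.derivative (u m)).eval y +
        c y * (u m).eval y * (u m).eval y)) +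
      ∑ m ∈ Icc 1 (M + 1), σ m * jump ℓ M u m * jump ℓ M u m := by
    unfold nipg; ring
  linarith

theorem brokenInner_load_le (hℓ : 0 ≤ ℓ) (hM : M ≠ 0) {f : ℝ → ℝ}
    (hf : ContinuousOn f (Set.Icc 0 ℓ)) {w₁ : ℝ} (hw₁ : 0 ≤ w₁) {ι : Type*} {s : Finset ι}
    {w : ι → ℝ} (hw : ∀ j ∈ s, 0 ≤ w j) (u₁ : ℕ → Polynomial ℝ)
    (u : ι → ℕ → Polynomial ℝ) (v : ℕ → Polynomial ℝ) :
    brokenInner ℓ M (fun m y => f y + w₁ * (u₁ m).eval y + ∑ j ∈ s, w j * (u j m).eval y)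
        (fun m y => (v m).eval y) ≤
      (funL2 ℓ f + w₁ * brokenL2 ℓ M u₁ + ∑ j ∈ s, w j * brokenL2 ℓ M (u j)) *
        brokenL2 ℓ M v := by
  have hf' : BrokenContinuous ℓ M fun _ => f := .of_continuousOn hℓ hf
  have hu₁ : BrokenContinuous ℓ M fun m y => w₁ * (u₁ m).eval y :=
    (BrokenContinuous.polynomial u₁).const_mul w₁
  have hu : ∀ j ∈ s, BrokenContinuous ℓ M fun m y => w j * (u j m).eval y :=
    fun j _ => (BrokenContinuous.polynomial (u j)).const_mul (w j)
  have hv : BrokenContinuous ℓ M fun m y => (v m).eval y := .polynomial v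
  rw [brokenInner_add_left (hf'.add hu₁) (.sum s hu) hv, brokenInner_add_left hf' hu₁ hv,
    brokenInner_sum_left s hu hv, brokenInner_const_mul_left, add_mul, add_mul, Finset.sum_mul,
    funL2_eq_sqrt_brokenInner hℓ hM hf, brokenL2_eq_sqrt_brokenInner]
  simp only [brokenInner_const_mul_left, mul_assoc, brokenL2_eq_sqrt_brokenInner]
  gcongr with j hj
  · exact brokenInner_le_sqrt_mul_sqrt hℓ hf' hv
  · exact brokenInner_le_sqrt_mul_sqrt hℓ (.polynomial u₁) hv
  · exact hw j hj
  · exact brokenInner_le_sqrt_mul_sqrt hℓ (.polynomial (u j)) hv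

end Broken

theorem l1nipg_stability_step_general (α T r : ℝ) (hα : α ∈ Set.Ioo (0 : ℝ) 1) (hT : 0 < T)
    (hr : 1 ≤ r) (N : ℕ) (hN : 0 < N) (ℓ : ℝ) (hℓ : 0 < ℓ) (M k : ℕ) (hM : 1 ≤ M)
    (a a' b p : ℝ → ℝ)
    (ha : ∀ y ∈ Set.Icc 0 ℓ, HasDerivAt a (a' y) y)
    (hapos : ∀ y ∈ Set.Icc 0 ℓ, 0 < a y)
    (hb : ContinuousOn b (Set.Icc 0 ℓ)) (hbnn : ∀ y ∈ Set.Icc 0 ℓ, 0 ≤ b y)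
    (hppos : ∀ t ∈ Set.Icc 0 T, 0 < p t)
    (σ : ℕ → ℝ) (hσ : ∀ m, 0 ≤ σ m)
    (f : ℕ → ℝ → ℝ) (hf : ∀ n, ContinuousOn (f n) (Set.Icc 0 ℓ))
    (uh : ℕ → ℕ → Polynomial ℝ)
    (hdeg : ∀ n m, (uh n m).degree ≤ k)
    (hscheme : ∀ n, 2 ≤ n → n ≤ N + 1 →
      ∀ v : ℕ → Polynomial ℝ, (∀ m, (v m).degree ≤ k) →
        nipg ℓ M (fun y => p (tmesh T r N n) * a y)
            (fun y => p (tmesh T r N n) * b y + That α T r N n (n - 1)) σ (uh n) v =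
          ∑ m ∈ Finset.Icc 1 M, ∫ y in node ℓ M m..node ℓ M (m + 1),
            (f n y + That α T r N n 1 * (uh 1 m).eval y +
                ∑ j ∈ Finset.Icc 2 (n - 1),
                  (That α T r N n j - That α T r N n (j - 1)) * (uh j m).eval y) *
              (v m).eval y) :
    ∀ n, 2 ≤ n → n ≤ N + 1 →
      brokenL2 ℓ M (uh n) ≤
        tau T r N (n - 1) ^ α * Real.Gamma (2 - α) *
          (funL2 ℓ (f n) + That α T r N n 1 * brokenL2 ℓ M (uh 1) +
            ∑ j ∈ Finset.Icc 2 (n - 1),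
              (That α T r N n j - That α T r N n (j - 1)) * brokenL2 ℓ M (uh j)) := by
  intro n hn hnN
  obtain ⟨hα₀, hα₁⟩ := hα
  have hr₀ : 0 < r := by linarith
  have hτ := tau_pos hT hr₀ hN (by omega : 1 ≤ n - 1)
  have hpn : 0 < p (tmesh T r N n) := hppos _ (tmesh_mem_Icc hT.le hr₀.le hN (by omega) hnN)
  have hacont : ContinuousOn a (Set.Icc 0 ℓ) :=
    fun y hy => (ha y hy).continuousAt.continuousWithinAt
  have hw₁ : 0 ≤ That α T r N n 1 := That_nonneg hα₁.le hT hr₀ hN le_rfl (by omega)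
  have hw : ∀ j ∈ Finset.Icc 2 (n - 1), 0 ≤ That α T r N n j - That α T r N n (j - 1) :=
    fun j hj => sub_nonneg.mpr <| That_pred_le_That hα₀.le hα₁.le hT hr₀ hN
      (Finset.mem_Icc.mp hj).1 (by have := (Finset.mem_Icc.mp hj).2; omega)
  set C := funL2 ℓ (f n) + That α T r N n 1 * brokenL2 ℓ M (uh 1) +
    ∑ j ∈ Finset.Icc 2 (n - 1), (That α T r N n j - That α T r N n (j - 1)) * brokenL2 ℓ M (uh j)
  have hC : 0 ≤ C := add_nonneg (add_nonneg (Real.sqrt_nonneg _)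
    (mul_nonneg hw₁ (Real.sqrt_nonneg _)))
    (Finset.sum_nonneg fun j hj => mul_nonneg (hw j hj) (Real.sqrt_nonneg _))
  have henergy : That α T r N n (n - 1) * brokenL2 ℓ M (uh n) ^ 2 ≤ C * brokenL2 ℓ M (uh n) :=
    calc _ ≤ _ := mul_brokenL2_sq_le_nipg hℓ.le (by fun_prop)
            (fun y hy => (mul_pos hpn (hapos y hy)).le) (by fun_prop)
            (fun y hy => le_add_of_nonneg_left (mul_nonneg hpn.le (hbnn y hy))) hσ (uh n)
      _ = _ := hscheme n hn hnN (uh n) (hdeg n)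
      _ ≤ _ := brokenInner_load_le hℓ.le (by omega) (hf n) hw₁ hw (uh 1) uh (uh n)
  rw [That_pred_eq hα₁ hn hτ] at henergy
  have hd : 0 < tau T r N (n - 1) ^ α * Real.Gamma (2 - α) :=
    mul_pos (Real.rpow_pos_of_pos hτ α) (Real.Gamma_pos_of_pos (by linarith))
  rw [inv_mul_le_iff₀ hd] at henergy
  have hnorm : 0 ≤ brokenL2 ℓ M (uh n) := Real.sqrt_nonneg _
  rcases hnorm.eq_or_lt with hzero | hpos
  · rw [← hzero]; positivity
  · exact le_of_mul_le_mul_right (by nlinarith) hpos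

/-- `L²` stability of the fully discrete L1-NIPG scheme:
`‖u_h^n‖ ≤ τ_{n-1}^α Γ(2-α) (‖f^n‖ + T̂_{n,1}‖u_h^1‖ + Σ_{j=2}^{n-1}(T̂_{n,j} - T̂_{n,j-1})‖u_h^j‖)`. -/
theorem l1nipg_stability_step (α T r : ℝ) (hα : α ∈ Set.Ioo (0 : ℝ) 1) (hT : 0 < T)
    (hr : 1 ≤ r) (N : ℕ) (hN : 0 < N) (ℓ : ℝ) (hℓ : 0 < ℓ) (M k : ℕ) (hM : 1 ≤ M)
    (hk : 1 ≤ k) (a a' b p : ℝ → ℝ)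
    (ha : ∀ y ∈ Set.Icc 0 ℓ, HasDerivAt a (a' y) y)
    (ha' : ContinuousOn a' (Set.Icc 0 ℓ))
    (hapos : ∀ y ∈ Set.Icc 0 ℓ, 0 < a y)
    (hb : ContinuousOn b (Set.Icc 0 ℓ)) (hbnn : ∀ y ∈ Set.Icc 0 ℓ, 0 ≤ b y)
    (hp : ContinuousOn p (Set.Icc 0 T)) (hppos : ∀ t ∈ Set.Icc 0 T, 0 < p t)
    (σ : ℕ → ℝ) (hσ : ∀ m, 0 ≤ σ m)
    (f : ℕ → ℝ → ℝ) (hf : ∀ n, ContinuousOn (f n) (Set.Icc 0 ℓ))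
    (uh : ℕ → ℕ → Polynomial ℝ)
    (hdeg : ∀ n m, (uh n m).degree ≤ k)
    (hscheme : ∀ n, 2 ≤ n → n ≤ N + 1 →
      ∀ v : ℕ → Polynomial ℝ, (∀ m, (v m).degree ≤ k) →
        nipg ℓ M (fun y => p (tmesh T r N n) * a y)
            (fun y => p (tmesh T r N n) * b y + That α T r N n (n - 1)) σ (uh n) v =
          ∑ m ∈ Finset.Icc 1 M, ∫ y in node ℓ M m..node ℓ M (m + 1),
            (f n y + That α T r N n 1 * (uh 1 m).eval y +
                ∑ j ∈ Finset.Icc 2 (n - 1),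
                  (That α T r N n j - That α T r N n (j - 1)) * (uh j m).eval y) *
              (v m).eval y) :
    ∀ n, 2 ≤ n → n ≤ N + 1 →
      brokenL2 ℓ M (uh n) ≤
        tau T r N (n - 1) ^ α * Real.Gamma (2 - α) *
          (funL2 ℓ (f n) + That α T r N n 1 * brokenL2 ℓ M (uh 1) +
            ∑ j ∈ Finset.Icc 2 (n - 1),
              (That α T r N n j - That α T r N n (j - 1)) * brokenL2 ℓ M (uh j)) :=
  l1nipg_stability_step_general α T r hα hT hr N hN ℓ hℓ M k hM a a' b p ha hapos hb hbnn hppos σ hσ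
    f hf uh hdeg hscheme
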